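/- arXiv:1408.6858 — 2 statements merged into one kernel-verified Lean document; each statement's English description precedes it below -/
import Mathlib

section
/- Let p be a prime with p > 3 and let g denote the multiplicative order of 2 in (ℤ/pℤ)^*. Let n = 2^b + 2^a where b > a ≥ 0 and n ≥ 5, and suppose a ≡ b ≡ g−1 (mod g). Then the cyclotomic polynomial Φ_{2p}(t) divides the descent set polynomial Q_n(t). -/
/-- The descent set of a permutation of `Fin n`, as a subset of `[n-1] = {1,…,n-1}`
(1-based positions): `i` is a descent if `π(i) > π(i+1)`. -/
def descentSet (n : ℕ) (π : Equiv.Perm (Fin n)) : Finset ℕ :=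
  (Finset.Ico 1 n).filter fun i => ∀ h : i < n, π ⟨i, h⟩ < π ⟨i - 1, by omega⟩

/-- The descent set statistic `β_n(S)`: the number of permutations of `{1,…,n}`
with descent set `S`. -/
def beta (n : ℕ) (S : Finset ℕ) : ℕ :=
  (Finset.univ.filter fun π : Equiv.Perm (Fin n) => descentSet n π = S).card

/-- The descent set polynomial `Q_n(t) = ∑_{S ⊆ [n-1]} t^{β_n(S)}`. -/
noncomputable def Q (n : ℕ) : Polynomial ℤ :=
  ∑ S ∈ (Finset.Ico 1 n).powerset, Polynomial.X ^ beta n S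

/-!
Write `x = 2^a`, `y = 2^b`, `n = x + y`. As `a ≡ b ≡ -1 (mod g)`, both `2^a` and `2^b` are
inverse to `2` modulo `p`; hence `n ≡ 1`, while `x ≡ 1/2` and `x + 1 ≡ 3/2` are neither `0` nor
`1` modulo `p`, so Lucas' theorem gives `p ∣ C(n, x)` and `p ∣ C(n, x + 1)`. Modulo `2`,
`C(n, k)` is odd only for `k ∈ {0, x, y, n}`.

Let `α_n(T) = ∑_{R ⊆ T} β_n(R)` count the permutations with descent set inside `T`. It is a
multinomial coefficient, so `C(n, w) * C(w, u) ∣ α_n(T)` whenever `u ≤ w` lie in `T`, and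
`α_n({x}) = C(n, x)`. Inverting `α_n(T ∪ {u}) = ∑_{R ⊆ T} (β_n(R) + β_n(R ∪ {u}))`, toggling `x + 1`
in `S` negates `β_n(S)` modulo `p` and modulo `2`, whereas toggling `x` negates it modulo `p` and
flips its parity. So `S ↦ S ∆ {x, x + 1}` is a fixed-point-free involution of the subsets of `[n-1]`
that changes `β_n` by an odd multiple of `p`, and `Φ_{2p}` divides `t^i + t^j` whenever
`i - j` is an odd multiple of `p`.
-/

open Finset Polynomial Nat

theorem Finset.eq_of_sum_powerset_eq {α M : Type*} [DecidableEq α] [AddCancelCommMonoid M]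
    {U : Finset α} {f g : Finset α → M}
    (h : ∀ S ⊆ U, ∑ R ∈ S.powerset, f R = ∑ R ∈ S.powerset, g R) : ∀ S ⊆ U, f S = g S := by
  intro S
  induction S using Finset.strongInduction with
  | H S ih =>
    intro hS
    have hproper : ∑ R ∈ S.powerset.erase S, f R = ∑ R ∈ S.powerset.erase S, g R :=
      sum_congr rfl fun R hR =>
        have hRS : R ⊂ S := ssubset_iff_subset_ne.mpr
          ⟨mem_powerset.mp (mem_of_mem_erase hR), ne_of_mem_erase hR⟩
        ih R hRS (hRS.subset.trans hS)
    have hsum := h S hS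
    rw [← add_sum_erase _ _ (mem_powerset_self S), ← add_sum_erase _ _ (mem_powerset_self S),
      hproper] at hsum
    exact add_right_cancel hsum

theorem Finset.dvd_sum_of_involution {ι R : Type*} [CommRing R] {s : Finset ι} {f : ι → R}
    {d : R} (J : ι → ι) (hJs : ∀ i ∈ s, J i ∈ s) (hJJ : ∀ i ∈ s, J (J i) = i)
    (hJne : ∀ i ∈ s, J i ≠ i) (hd : ∀ i ∈ s, d ∣ f i + f (J i)) : d ∣ ∑ i ∈ s, f i := by
  rw [← Ideal.mem_span_singleton, ← Ideal.Quotient.eq_zero_iff_mem, map_sum]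
  refine sum_involution (fun i _ => J i) (fun i hi => ?_) (fun i hi _ => hJne i hi) hJs hJJ
  rw [← map_add, Ideal.Quotient.eq_zero_iff_mem, Ideal.mem_span_singleton]
  exact hd i hi

theorem Fin.card_filter_univ_val {n : ℕ} (P : ℕ → Prop) [DecidablePred P] :
    #{j : Fin n | P j} = #{k ∈ range n | P k} := by
  refine card_bij (fun j _ => (j : ℕ)) (fun j hj => ?_) (fun _ _ _ _ h => Fin.ext h) fun k hk => ?_
  · simp only [mem_filter, mem_univ, true_and, mem_range] at hj ⊢
    exact ⟨j.2, hj⟩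
  · simp only [mem_filter, mem_range] at hk
    exact ⟨⟨k, hk.1⟩, by simpa using hk.2, rfl⟩

theorem exists_perm_comp_eq_of_card_fiber_eq {α γ : Type*} [Fintype α] [LinearOrder α]
    [DecidableEq γ] {c c' : α → γ} (h : ∀ i, #{v | c v = i} = #{v | c' v = i}) :
    ∃ τ : Equiv.Perm α, c' ∘ τ = c ∧ ∀ v w, c v = c w → v < w → τ v < τ w := by
  let e : ∀ i, {v // c v = i} ≃o {v // c' v = i} := fun i =>
    (Fintype.orderIsoFinOfCardEq _ ((Fintype.card_subtype _).trans (h i))).symm.trans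
      (Fintype.orderIsoFinOfCardEq _ (Fintype.card_subtype _))
  let τ := Equiv.ofFiberEquiv fun i => (e i).toEquiv
  have hτ : ∀ i (x : {v // c v = i}), τ x = e i x := by
    rintro _ ⟨v, rfl⟩
    rfl
  refine ⟨τ, funext (Equiv.ofFiberEquiv_map _), fun v w hvw hlt => ?_⟩
  rw [hτ (c v) ⟨v, rfl⟩, hτ (c v) ⟨w, hvw.symm⟩]
  exact (e (c v)).strictMono (show (⟨v, rfl⟩ : {x // c x = c v}) < ⟨w, hvw.symm⟩ from hlt)

theorem pow_mul_self_eq_one_of_mod_eq {G : Type*} [Monoid G] {x : G} (hpos : 0 < orderOf x)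
    {a : ℕ} (ha : a % orderOf x = (orderOf x - 1) % orderOf x) : x ^ a * x = 1 := by
  rw [← pow_succ, ← orderOf_dvd_iff_pow_eq_one, Nat.dvd_iff_mod_eq_zero, Nat.add_mod, ha,
    ← Nat.add_mod, Nat.sub_add_cancel hpos, Nat.mod_self]

theorem prime_dvd_choose_of_cast_eq_one {p n k : ℕ} [Fact p.Prime] (hn : (n : ZMod p) = 1)
    (hk0 : (k : ZMod p) ≠ 0) (hk1 : (k : ZMod p) ≠ 1) : p ∣ n.choose k := by
  have hp1 : 1 < p := (Fact.out : p.Prime).one_lt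
  have hnp : n % p = 1 := by rw [← ZMod.val_natCast, hn, ZMod.val_one]
  have hkp : 1 < k % p := by
    rw [← ZMod.val_natCast] at *
    rw [Ne, ← ZMod.val_eq_zero] at hk0
    rw [Ne, ← ZMod.val_eq_one hp1] at hk1
    omega
  have := Choose.choose_modEq_choose_mod_mul_choose_div_nat (p := p) (n := n) (k := k)
  rwa [hnp, Nat.choose_eq_zero_of_lt hkp, zero_mul, Nat.modEq_zero_iff_dvd] at this

theorem choose_two_pow_add_two_pow_cast (a b k : ℕ) :
    ((2 ^ b + 2 ^ a).choose k : ZMod 2) =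
      (if k = 2 ^ b + 2 ^ a then 1 else 0) + (if k = 2 ^ b then 1 else 0) +
        (if k = 2 ^ a then 1 else 0) + (if k = 0 then 1 else 0) := by
  have h : ((X : (ZMod 2)[X]) + 1) ^ (2 ^ b + 2 ^ a) =
      X ^ (2 ^ b + 2 ^ a) + X ^ 2 ^ b + X ^ 2 ^ a + 1 := by
    rw [pow_add, add_pow_char_pow, add_pow_char_pow, one_pow, one_pow, pow_add]
    ring
  rw [← coeff_X_add_one_pow, h]
  simp only [coeff_add, coeff_X_pow, coeff_one]

theorem cyclotomic_two_mul_dvd_X_pow_add_one (R : Type*) [CommRing R] (n : ℕ) :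
    cyclotomic (2 * n) R ∣ X ^ n + 1 := by
  rcases Nat.eq_zero_or_pos n with rfl | hn
  · simp
  have h := X_pow_sub_one_mul_prod_cyclotomic_eq_X_pow_sub_one_of_dvd R
    (dvd_mul_left n 2) (by positivity)
  rw [pow_mul', sq, mul_self_sub_one, mul_comm (X ^ n + 1)] at h
  have hcancel : ∏ d ∈ (2 * n).divisors \ n.divisors, cyclotomic d R = X ^ n + 1 :=
    (monic_X_pow_sub_C (1 : R) hn.ne').isRegular.left (by simpa only [map_one] using h)
  rw [← hcancel]
  apply dvd_prod_of_mem
  simp only [mem_sdiff, Nat.mem_divisors, dvd_refl, ne_eq, mul_eq_zero, hn.ne', or_false,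
    OfNat.ofNat_ne_zero, not_false_eq_true, and_self, and_true, true_and]
  exact fun h => by have := Nat.le_of_dvd hn h; omega

theorem cyclotomic_two_mul_dvd_X_pow_add_X_pow (R : Type*) [CommRing R] {n i j : ℕ}
    (hn : (i : ZMod n) = j) (h2 : (i : ZMod 2) ≠ j) :
    cyclotomic (2 * n) R ∣ X ^ i + X ^ j := by
  wlog hji : j ≤ i generalizing i j
  · rw [add_comm]
    exact this hn.symm h2.symm (by omega)
  rw [ZMod.natCast_eq_natCast_iff] at hn
  rw [Ne, ZMod.natCast_eq_natCast_iff, Nat.ModEq.comm, Nat.modEq_iff_dvd' hji,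
    ← even_iff_two_dvd, Nat.not_even_iff_odd] at h2
  obtain ⟨k, hk⟩ := (Nat.modEq_iff_dvd' hji).mp hn.symm
  calc cyclotomic (2 * n) R ∣ X ^ n + 1 := cyclotomic_two_mul_dvd_X_pow_add_one R n
    _ ∣ (X ^ n) ^ k + 1 ^ k := (Nat.Odd.of_mul_right (hk ▸ h2)).add_dvd_pow_add_pow _ _
    _ ∣ X ^ i + X ^ j := by
      refine Dvd.intro_left (X ^ j) ?_
      rw [one_pow, ← pow_mul, ← hk, mul_add, mul_one, ← pow_add, Nat.add_sub_cancel' hji,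
        add_comm]

section Descents

variable {n : ℕ}

theorem mem_descentSet {π : Equiv.Perm (Fin n)} {i : ℕ} (h1 : 1 ≤ i) (h2 : i < n) :
    i ∈ descentSet n π ↔ π ⟨i, h2⟩ < π ⟨i - 1, by omega⟩ := by
  simp only [descentSet, mem_filter, mem_Ico, h1, h2, true_and, forall_true_left]

theorem descentSet_subset_Ico (π : Equiv.Perm (Fin n)) : descentSet n π ⊆ Ico 1 n :=
  filter_subset _ _

theorem descentSet_one : descentSet n 1 = ∅ := by
  refine eq_empty_of_forall_notMem fun i hi => ?_
  obtain ⟨h1, h2⟩ := mem_Ico.mp (descentSet_subset_Ico _ hi)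
  rw [mem_descentSet h1 h2, Fin.lt_def] at hi
  simp only [Equiv.Perm.coe_one, id_eq] at hi
  omega

-- `α_n(T)` in the usual notation
def alpha (n : ℕ) (T : Finset ℕ) : ℕ :=
  #{π : Equiv.Perm (Fin n) | descentSet n π ⊆ T}

theorem alpha_eq_sum_beta (n : ℕ) (T : Finset ℕ) :
    alpha n T = ∑ R ∈ T.powerset, beta n R := by
  rw [alpha, card_eq_sum_card_fiberwise fun π hπ => mem_powerset.mpr (mem_filter.mp hπ).2]
  refine sum_congr rfl fun R hR => congrArg card ?_
  ext π
  simp only [mem_filter, mem_univ, true_and, and_iff_right_iff_imp]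
  exact fun h => h ▸ mem_powerset.mp hR

theorem alpha_insert {u : ℕ} {T : Finset ℕ} (hu : u ∉ T) :
    alpha n (insert u T) = ∑ R ∈ T.powerset, (beta n R + beta n (insert u R)) := by
  rw [alpha_eq_sum_beta, sum_powerset_insert hu, sum_add_distrib]

theorem alpha_Ico (n : ℕ) : alpha n (Ico 1 n) = n ! := by
  rw [alpha, filter_true_of_mem fun π _ => descentSet_subset_Ico π, Finset.card_univ,
    Fintype.card_perm, Fintype.card_fin]

end Descents

section Blocks

variable {n : ℕ} {γ : Type*}

def ChangesOnlyAt (blk : Fin n → γ) (T : Finset ℕ) : Prop :=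
  ∀ i (hi : i < n), 1 ≤ i → i ∉ T → blk ⟨i - 1, by omega⟩ = blk ⟨i, hi⟩

theorem descentSet_mul_subset {blk : Fin n → γ} {T : Finset ℕ} (hblk : ChangesOnlyAt blk T)
    {π τ : Equiv.Perm (Fin n)} (hπ : descentSet n π ⊆ T)
    (hτ : ∀ v w, blk (π.symm v) = blk (π.symm w) → v < w → τ v < τ w) :
    descentSet n (τ * π) ⊆ T := by
  intro i hi
  obtain ⟨h1, h2⟩ := mem_Ico.mp (descentSet_subset_Ico _ hi)
  rw [mem_descentSet h1 h2] at hi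
  by_contra hiT
  have hasc : π ⟨i - 1, by omega⟩ < π ⟨i, h2⟩ := by
    refine lt_of_le_of_ne (not_lt.mp fun h => hiT (hπ ((mem_descentSet h1 h2).mpr h))) fun h => ?_
    have := congrArg Fin.val (π.injective h)
    simp only at this
    omega
  exact (hτ _ _ (by simpa using hblk i h2 h1 hiT) hasc).not_gt hi

variable [DecidableEq γ] (blk : Fin n → γ)

theorem card_fiber_le {T : Finset ℕ} (hblk : ChangesOnlyAt blk T) (σ σ' : Equiv.Perm (Fin n)) :
    #{π | descentSet n π ⊆ T ∧ blk ∘ π.symm = blk ∘ σ.symm} ≤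
      #{π | descentSet n π ⊆ T ∧ blk ∘ π.symm = blk ∘ σ'.symm} := by
  have hcard : ∀ (σ : Equiv.Perm (Fin n)) i, #{v | (blk ∘ σ.symm) v = i} = #{j | blk j = i} :=
    fun σ i => card_equiv σ.symm fun v => by simp
  obtain ⟨τ, hτ, hτmono⟩ :=
    exists_perm_comp_eq_of_card_fiber_eq fun i => (hcard σ i).trans (hcard σ' i).symm
  refine card_le_card_of_injOn (τ * ·) (fun π hπ => ?_) fun π _ π' _ h => mul_left_cancel h
  simp only [coe_filter, Set.mem_ofPred_eq, mem_univ, true_and] at hπ ⊢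
  obtain ⟨hdes, hπσ⟩ := hπ
  refine ⟨descentSet_mul_subset hblk hdes fun v w hvw => hτmono v w (by rw [← hπσ]; exact hvw),
    funext fun v => ?_⟩
  have h1 := congrFun hτ (τ.symm v)
  have h2 := congrFun hπσ (τ.symm v)
  simp only [Function.comp_apply, Equiv.apply_symm_apply] at h1 h2
  rw [Function.comp_apply, Equiv.Perm.mul_def, Equiv.symm_trans_apply, h2, ← h1,
    Function.comp_apply]

theorem alpha_eq_card_image_mul {T : Finset ℕ} (hblk : ChangesOnlyAt blk T) :
    alpha n T = #(univ.image fun σ : Equiv.Perm (Fin n) => blk ∘ σ.symm) *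
      #{π | descentSet n π ⊆ T ∧ blk ∘ π.symm = blk} := by
  rw [alpha, card_eq_sum_card_fiberwise (f := fun π : Equiv.Perm (Fin n) => blk ∘ π.symm)
    fun π _ => mem_image_of_mem (fun σ : Equiv.Perm (Fin n) => blk ∘ σ.symm) (mem_univ π)]
  rw [sum_congr rfl fun c hc => ?_, sum_const, smul_eq_mul]
  obtain ⟨σ, -, rfl⟩ := mem_image.mp hc
  rw [filter_filter]
  exact le_antisymm (card_fiber_le blk hblk σ 1) (card_fiber_le blk hblk 1 σ)

-- Compare `alpha_eq_card_image_mul` for `T` and for `T = [n-1]`, where the fibre over `blk` is the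
-- stabiliser of `blk`.
theorem alpha_mul_prod_factorial [Fintype γ] {T : Finset ℕ} (hblk : ChangesOnlyAt blk T) :
    alpha n T * ∏ i, (#{j | blk j = i})! =
      n ! * #{π | descentSet n π ⊆ T ∧ blk ∘ π.symm = blk} := by
  have hstab : #{π | descentSet n π ⊆ Ico 1 n ∧ blk ∘ π.symm = blk} =
      ∏ i, (#{j | blk j = i})! := by
    have := DomMulAct.stabilizer_card blk
    simp only [Fintype.card_subtype] at this
    rw [← this]
    congr 1
    ext π
    simp only [mem_filter, mem_univ, true_and, descentSet_subset_Ico]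
    rw [Equiv.comp_symm_eq, eq_comm]
  have hall := alpha_eq_card_image_mul blk (T := Ico 1 n)
    fun i hi h1 h => absurd (mem_Ico.mpr ⟨h1, hi⟩) h
  rw [alpha_Ico, hstab] at hall
  rw [alpha_eq_card_image_mul blk hblk, hall]
  ring

end Blocks

section TwoCuts

variable {n : ℕ}

def twoCut (u w : ℕ) (j : Fin n) : Bool × Bool := (decide (u ≤ (j : ℕ)), decide (w ≤ (j : ℕ)))

theorem changesOnlyAt_twoCut {u w : ℕ} {T : Finset ℕ} (hu : u ∈ T) (hw : w ∈ T) :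
    ChangesOnlyAt (twoCut u w : Fin n → Bool × Bool) T := by
  intro i hi h1 hiT
  have hiu : i ≠ u := fun h => hiT (h ▸ hu)
  have hiw : i ≠ w := fun h => hiT (h ▸ hw)
  simp only [twoCut, Prod.mk.injEq, decide_eq_decide]
  omega

theorem prod_factorial_card_twoCut {u w : ℕ} (huw : u ≤ w) (hwn : w ≤ n) :
    ∏ i, (#{j : Fin n | twoCut u w j = i})! = u ! * (w - u)! * (n - w)! := by
  rw [Fintype.prod_prod_type, Fintype.prod_bool, Fintype.prod_bool, Fintype.prod_bool]
  simp only [twoCut, Prod.mk.injEq, decide_eq_true_eq, decide_eq_false_iff_not]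
  have hcard : ∀ (P : ℕ → Prop) [DecidablePred P] (a b : ℕ),
      (∀ k, k < n ∧ P k ↔ a ≤ k ∧ k < b) → #{j : Fin n | P j} = b - a := fun P _ a b hP => by
    rw [Fin.card_filter_univ_val, ← Nat.card_Ico]
    congr 1
    ext k
    simp only [mem_filter, mem_range, mem_Ico, hP]
  rw [hcard (fun k => u ≤ k ∧ w ≤ k) w n (by omega),
    hcard (fun k => u ≤ k ∧ ¬w ≤ k) u w (by omega), hcard (fun k => ¬u ≤ k ∧ w ≤ k) 0 0 (by omega),
    hcard (fun k => ¬u ≤ k ∧ ¬w ≤ k) 0 u (by omega)]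
  simp only [Nat.sub_zero, Nat.sub_self, Nat.factorial_zero]
  ring

theorem alpha_mul_factorials {u w : ℕ} {T : Finset ℕ} (huw : u ≤ w) (hwn : w ≤ n) (hu : u ∈ T)
    (hw : w ∈ T) :
    alpha n T * (u ! * (w - u)! * (n - w)!) =
      n ! * #{π | descentSet n π ⊆ T ∧ twoCut u w ∘ π.symm = twoCut u w} := by
  rw [← prod_factorial_card_twoCut huw hwn]
  exact alpha_mul_prod_factorial _ (changesOnlyAt_twoCut hu hw)

theorem choose_mul_choose_dvd_alpha {u w : ℕ} {T : Finset ℕ} (huw : u ≤ w) (hwn : w ≤ n)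
    (hu : u ∈ T) (hw : w ∈ T) : n.choose w * w.choose u ∣ alpha n T := by
  have key := alpha_mul_factorials huw hwn hu hw
  have hfac : n ! = n.choose w * w.choose u * (u ! * (w - u)! * (n - w)!) := by
    rw [← Nat.choose_mul_factorial_mul_factorial hwn,
      ← Nat.choose_mul_factorial_mul_factorial huw]
    ring
  have hpos : 0 < u ! * (w - u)! * (n - w)! := by positivity
  rw [hfac, mul_right_comm (n.choose w * w.choose u)] at key
  exact ⟨_, Nat.eq_of_mul_eq_mul_right hpos key⟩

theorem choose_dvd_alpha {u : ℕ} {T : Finset ℕ} (hun : u ≤ n) (hu : u ∈ T) :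
    n.choose u ∣ alpha n T := by
  simpa using choose_mul_choose_dvd_alpha le_rfl hun hu hu

theorem eq_one_of_descentSet_subset_singleton {u : ℕ} {π : Equiv.Perm (Fin n)}
    (hπ : descentSet n π ⊆ {u}) (hcut : ∀ j : Fin n, u ≤ (π j : ℕ) ↔ u ≤ (j : ℕ)) : π = 1 := by
  have hadj : ∀ i (hi : i + 1 < n), π ⟨i, by omega⟩ < π ⟨i + 1, hi⟩ := by
    intro i hi
    by_cases hiu : i + 1 = u
    · have h0 := hcut ⟨i, by omega⟩
      have h1 := hcut ⟨i + 1, hi⟩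
      simp only at h0 h1
      rw [Fin.lt_def]
      omega
    · refine lt_of_le_of_ne (not_lt.mp fun h => hiu ?_) fun h => ?_
      · exact mem_singleton.mp (hπ ((mem_descentSet (by omega) hi).mpr h))
      · simpa using π.injective h
  have hmono : StrictMono π := by
    cases n with
    | zero => exact fun a => a.elim0
    | succ m => exact Fin.strictMono_iff_lt_succ.mpr fun i => hadj i (Nat.succ_lt_succ i.2)
  have hid : (π : Fin n → Fin n) = id :=
    (hmono.range_inj strictMono_id).mp (by rw [π.surjective.range_eq, Set.range_id])
  exact Equiv.ext (congrFun hid)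

theorem alpha_singleton {u : ℕ} (hun : u ≤ n) : alpha n {u} = n.choose u := by
  have key := alpha_mul_factorials le_rfl hun (mem_singleton_self u) (mem_singleton_self u)
  have hfiber : ({π | descentSet n π ⊆ {u} ∧ twoCut u u ∘ π.symm = twoCut u u} :
      Finset (Equiv.Perm (Fin n))) = {1} := by
    ext π
    simp only [mem_filter, mem_univ, true_and, mem_singleton]
    constructor
    · rintro ⟨hπ, hcut⟩
      refine eq_one_of_descentSet_subset_singleton hπ fun j => ?_
      have := congrFun ((Equiv.comp_symm_eq _ _ _).mp hcut) j
      simpa [twoCut] using this.symm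
    · rintro rfl
      exact ⟨by simp [descentSet_one], rfl⟩
  rw [hfiber, card_singleton, mul_one, ← Nat.choose_mul_factorial_mul_factorial hun, Nat.sub_self,
    factorial_zero, mul_one, mul_assoc] at key
  exact Nat.eq_of_mul_eq_mul_right (by positivity) key

end TwoCuts

section Toggles

variable {n : ℕ}

theorem beta_symmDiff_add_beta {R : Type*} [CommRing R] {u : ℕ} {c : R}
    (h : ∀ T ⊆ Ico 1 n, u ∉ T → (alpha n (insert u T) : R) = 2 ^ #T * c)
    {S : Finset ℕ} (hS : S ⊆ Ico 1 n) : (beta n (symmDiff S {u}) : R) + beta n S = c := by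
  have key : ∀ S ⊆ (Ico 1 n).erase u, (beta n S : R) + beta n (insert u S) = c := by
    refine eq_of_sum_powerset_eq (g := fun _ => c) fun T hT => ?_
    have huT : u ∉ T := fun hu => notMem_erase u _ (hT hu)
    rw [sum_const, card_powerset, nsmul_eq_mul, Nat.cast_pow, Nat.cast_ofNat,
      ← h T (hT.trans (erase_subset _ _)) huT, alpha_insert huT]
    push_cast
    rfl
  by_cases huS : u ∈ S
  · rw [symmDiff_of_ge (singleton_subset_iff.mpr huS), sdiff_singleton_eq_erase]
    simpa [insert_erase huS] using key (S.erase u) (erase_subset_erase u hS)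
  · rw [(disjoint_singleton_right.mpr huS).symmDiff_eq_sup, sup_eq_union, union_comm,
      ← insert_eq, add_comm]
    exact key S fun v hv => mem_erase.mpr ⟨fun h => huS (h ▸ hv), hS hv⟩

theorem beta_symmDiff_add_beta_eq_zero {q u : ℕ} (hun : u ≤ n) (hq : q ∣ n.choose u)
    {S : Finset ℕ} (hS : S ⊆ Ico 1 n) : (beta n (symmDiff S {u}) : ZMod q) + beta n S = 0 :=
  beta_symmDiff_add_beta (fun T _ _ => by
    rw [mul_zero, ZMod.natCast_eq_zero_iff]
    exact hq.trans (choose_dvd_alpha hun (mem_insert_self u T))) hS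

theorem alpha_insert_two_pow_cast {a b : ℕ} (hab : a < b) {T : Finset ℕ}
    (hT : T ⊆ Ico 1 (2 ^ b + 2 ^ a)) (haT : 2 ^ a ∉ T) :
    (alpha (2 ^ b + 2 ^ a) (insert (2 ^ a) T) : ZMod 2) = 2 ^ #T := by
  have hlt : 2 ^ a < 2 ^ b := Nat.pow_lt_pow_right one_lt_two hab
  have hpos : 0 < 2 ^ a := by positivity
  rcases T.eq_empty_or_nonempty with rfl | hne
  · rw [insert_empty, alpha_singleton (by omega), choose_two_pow_add_two_pow_cast]
    simp [hlt.ne]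
  rw [show (2 : ZMod 2) ^ #T = 0 by rw [show (2 : ZMod 2) = 0 from rfl, zero_pow hne.card_pos.ne'],
    ZMod.natCast_eq_zero_iff]
  by_cases hTb : T = {2 ^ b}
  · subst hTb
    exact ((Nat.prime_two.dvd_choose_pow hpos.ne' hlt.ne).mul_left _).trans
      (choose_mul_choose_dvd_alpha hlt.le (Nat.le_add_right _ _) (mem_insert_self _ _)
        (mem_insert_of_mem (mem_singleton_self _)))
  obtain ⟨s, hsT, hsb⟩ : ∃ s ∈ T, s ≠ 2 ^ b := by
    by_contra! h
    exact hTb (eq_singleton_iff_unique_mem.mpr ⟨by obtain ⟨s, hs⟩ := hne; exact h s hs ▸ hs, h⟩)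
  have hs := mem_Ico.mp (hT hsT)
  have hsa : s ≠ 2 ^ a := fun h => haT (h ▸ hsT)
  have hs0 : s ≠ 0 := by omega
  refine ((ZMod.natCast_eq_zero_iff _ _).mp ?_).trans
    (choose_dvd_alpha hs.2.le (mem_insert_of_mem hsT))
  rw [choose_two_pow_add_two_pow_cast]
  simp [hs.2.ne, hsb, hsa, hs0]

end Toggles

theorem cyclotomic_two_mul_dvd_Q {n p x : ℕ} (hx1 : 1 ≤ x) (hxn : x + 1 < n)
    (hpx : p ∣ n.choose x) (hpx1 : p ∣ n.choose (x + 1)) (h2x1 : 2 ∣ n.choose (x + 1))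
    (hα : ∀ T ⊆ Ico 1 n, x ∉ T → (alpha n (insert x T) : ZMod 2) = 2 ^ #T) :
    cyclotomic (2 * p) ℤ ∣ Q n := by
  have hD : symmDiff {x} {x + 1} = ({x, x + 1} : Finset ℕ) := by
    rw [(disjoint_singleton.mpr (by omega)).symmDiff_eq_sup, sup_eq_union, insert_eq]
  have hxI : {x, x + 1} ⊆ Ico 1 n := by
    rw [insert_subset_iff, singleton_subset_iff, mem_Ico, mem_Ico]
    omega
  refine dvd_sum_of_involution (symmDiff · {x, x + 1})
    (fun S hS => mem_powerset.mpr (symmDiff_le_sup.trans (union_subset (mem_powerset.mp hS) hxI)))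
    (fun S _ => symmDiff_symmDiff_cancel_right _ _) (fun S _ => by simp [symmDiff_eq_left])
    fun S hS => ?_
  rw [mem_powerset] at hS
  have hSx : symmDiff S {x} ⊆ Ico 1 n :=
    symmDiff_le_sup.trans (union_subset hS (singleton_subset_iff.mpr (hxI (mem_insert_self _ _))))
  have hp_x := beta_symmDiff_add_beta_eq_zero (by omega) hpx hS
  have hp_x1 := beta_symmDiff_add_beta_eq_zero (by omega) hpx1 hSx
  have h2_x := beta_symmDiff_add_beta (c := (1 : ZMod 2))
    (fun T hT hxT => by rw [mul_one]; exact hα T hT hxT) hS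
  have h2_x1 := beta_symmDiff_add_beta_eq_zero (by omega) h2x1 hSx
  show _ ∣ X ^ beta n S + X ^ beta n (symmDiff S {x, x + 1})
  rw [← hD, ← symmDiff_assoc]
  refine cyclotomic_two_mul_dvd_X_pow_add_X_pow _ (by linear_combination hp_x - hp_x1) fun h => ?_
  exact one_ne_zero (by linear_combination h2_x1 + h - h2_x : (1 : ZMod 2) = 0)

theorem two_pow_mul_two_eq_one {p a : ℕ} [Fact p.Prime] (hp2 : p ≠ 2)
    (ha : a % orderOf (2 : ZMod p) = (orderOf (2 : ZMod p) - 1) % orderOf (2 : ZMod p)) :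
    (2 : ZMod p) ^ a * 2 = 1 := by
  have hp := (Fact.out : p.Prime)
  have h2 : (2 : ZMod p) ≠ 0 := by
    intro h
    have := (ZMod.natCast_eq_zero_iff 2 p).mp (by exact_mod_cast h)
    exact hp2 ((Nat.prime_dvd_prime_iff_eq hp Nat.prime_two).mp this)
  refine pow_mul_self_eq_one_of_mod_eq ?_ ha
  exact Nat.pos_of_dvd_of_pos (ZMod.orderOf_dvd_card_sub_one h2) (by have := hp.two_le; omega)

theorem prime_dvd_choose_two_pow_add_two_pow {p a b : ℕ} [Fact p.Prime] (hp3 : p ≠ 3)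
    (ha : (2 : ZMod p) ^ a * 2 = 1) (hb : (2 : ZMod p) ^ b * 2 = 1) :
    p ∣ (2 ^ b + 2 ^ a).choose (2 ^ a) ∧ p ∣ (2 ^ b + 2 ^ a).choose (2 ^ a + 1) := by
  have hn : ((2 ^ b + 2 ^ a : ℕ) : ZMod p) = 1 := by
    push_cast
    linear_combination (1 - 2 ^ a) * hb + 2 ^ b * ha
  have h3 : (3 : ZMod p) ≠ 0 := by
    intro h
    have := (ZMod.natCast_eq_zero_iff 3 p).mp (by exact_mod_cast h)
    exact hp3 ((Nat.prime_dvd_prime_iff_eq Fact.out Nat.prime_three).mp this)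
  constructor <;> refine prime_dvd_choose_of_cast_eq_one hn ?_ ?_ <;> push_cast <;> intro h
  · exact one_ne_zero (by linear_combination 2 * h - ha : (1 : ZMod p) = 0)
  · exact one_ne_zero (by linear_combination ha - 2 * h : (1 : ZMod p) = 0)
  · exact h3 (by linear_combination 2 * h - ha)
  · exact one_ne_zero (by linear_combination 2 * h - ha : (1 : ZMod p) = 0)

theorem cyclotomic_two_p_dvd_order_minus_one_general (p a b g : ℕ) (hp : p.Prime) (hp3 : 3 < p)
    (hg : g = orderOf (2 : ZMod p))
    (hab : a < b)
    (hca : a % g = (g - 1) % g) (hcb : b % g = (g - 1) % g) :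
    Polynomial.cyclotomic (2 * p) ℤ ∣ Q (2 ^ b + 2 ^ a) := by
  have := Fact.mk hp
  subst hg
  have ha := two_pow_mul_two_eq_one (by omega) hca
  have hb := two_pow_mul_two_eq_one (by omega) hcb
  have ha0 : a ≠ 0 := by
    rintro rfl
    exact one_ne_zero (by linear_combination ha : (1 : ZMod p) = 0)
  have hx2 : 2 ≤ 2 ^ a := Nat.le_self_pow ha0 2
  have hxb : 2 * 2 ^ a ≤ 2 ^ b := by
    rw [← Nat.pow_succ']
    exact Nat.pow_le_pow_right two_pos hab
  obtain ⟨hpx, hpx1⟩ := prime_dvd_choose_two_pow_add_two_pow (by omega) ha hb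
  refine cyclotomic_two_mul_dvd_Q (by omega) (by omega) hpx hpx1 ?_
    fun T hT hxT => alpha_insert_two_pow_cast hab hT hxT
  have hxn : 2 ^ a + 1 ≠ 2 ^ b + 2 ^ a := by omega
  have hxy : 2 ^ a + 1 ≠ 2 ^ b := by omega
  rw [← ZMod.natCast_eq_zero_iff, choose_two_pow_add_two_pow_cast]
  simp [hxn, hxy]

/-- Let `p > 3` be prime with `g` the multiplicative order of `2` modulo `p`,
and let `n = 2^b + 2^a` with `b > a ≥ 0` and `n ≥ 5`. If
`a ≡ b ≡ g - 1 (mod g)`, then `Φ_{2p}` divides `Q_n(t)`. -/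
theorem cyclotomic_two_p_dvd_order_minus_one (p a b g : ℕ) (hp : p.Prime) (hp3 : 3 < p)
    (hg : g = orderOf (2 : ZMod p))
    (hab : a < b) (hn : 5 ≤ 2 ^ b + 2 ^ a)
    (hca : a % g = (g - 1) % g) (hcb : b % g = (g - 1) % g) :
    Polynomial.cyclotomic (2 * p) ℤ ∣ Q (2 ^ b + 2 ^ a) :=
  cyclotomic_two_p_dvd_order_minus_one_general p a b g hp hp3 hg hab hca hcb
end

section
/- Let p be an odd prime such that the multiplicative order g of 2 in (ℤ/pℤ)^* is even. Let n = 2^c + 2^b + 2^a where c > b > a ≥ 0 and n ≥ 11, and suppose that the residues of a, b, c modulo g form the multiset {1, g/2, g/2} (i.e. one of them is congruent to 1 and the other two to g/2 modulo g). Then the cyclotomic polynomial Φ_{2p}(t) divides the descent set polynomial Q_n(t). -/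
/-!
Toggling a position `i` gives the recursion
`β_{i+j}(S) + β_{i+j}(S ∆ {i}) = C(i+j, i) · β_i(S ∩ [1, i)) · β_j((S ∩ (i, i+j)) - i)`,
obtained by cutting a permutation after its first `i` entries. Modulo 2 it shows that `β_{2^x}`
is always odd and that `β_{2^u+2^v}(S)` is odd iff `S` contains both or neither of `2^u, 2^v`.

Let `n = 2^a + 2^b + 2^c` with distinct `a, b, c ≥ 1` and `p ∣ n`, so that `2p ∣ n`, and let `ζ` be
a primitive `2p`-th root of unity. Pair `S` with `S ∆ {1, 2^x}`, where `2^x` is a digit of `n` whose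
two pair sums `2^x + 2^y`, `2^x + 2^z` lie both in `S` or both outside it. Toggling `1` changes
`β_n` by a multiple of `n`, and toggling `2^x` then adds `C(n, 2^x)` times two odd numbers, an odd
multiple of `p`; so `ζ^{β_n}` changes sign and `Q_n(ζ) = 0`. The hypothesis on the residues gives
`2^a + 2^b + 2^c ≡ 2 - 1 - 1 ≡ 0 (mod p)`.
-/

open Finset Equiv
open scoped symmDiff

theorem erase_eq_erase_iff {α : Type*} [DecidableEq α] {i : α} {X S : Finset α} :
    X.erase i = S.erase i ↔ X = S ∨ X = S ∆ {i} := by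
  simp only [Finset.ext_iff, mem_erase, mem_symmDiff, mem_singleton]
  grind

theorem symmDiff_singleton_eq_erase {α : Type*} [DecidableEq α] {t : α} {S : Finset α}
    (ht : t ∈ S) : S ∆ {t} = S.erase t := by
  ext k
  by_cases hk : k = t <;> simp [mem_symmDiff, hk, ht]

theorem symmDiff_subset_of_subset {α : Type*} [DecidableEq α] {s S D : Finset α} (hS : S ⊆ s)
    (hD : D ⊆ s) : S ∆ D ⊆ s :=
  symmDiff_subset_union.trans (union_subset hS hD)

theorem sum_powerset_pow_eq_zero_of_symmDiff {α R : Type*} [DecidableEq α] [CommRing R]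
    {ζ : R} {m : ℕ} (hζ : ζ ^ m = -1) {U : Finset α} {f : Finset α → ℕ}
    (D : Finset α → Finset α) (hDU : ∀ S ⊆ U, D S ⊆ U) (hD : ∀ S ⊆ U, (D S).Nonempty)
    (hDD : ∀ S ⊆ U, D (S ∆ D S) = D S) (hf : ∀ S ⊆ U, f (S ∆ D S) ≡ f S + m [MOD 2 * m]) :
    ∑ S ∈ U.powerset, ζ ^ f S = 0 := by
  have hζ2 : ζ ^ (2 * m) = 1 := by rw [mul_comm, pow_mul, hζ, neg_one_sq]
  refine sum_involution (fun S _ => S ∆ D S) (fun S hS => ?_) (fun S hS _ => ?_)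
    (fun S hS => ?_) (fun S hS => ?_) <;> rw [mem_powerset] at hS
  · rw [pow_eq_pow_of_modEq (hf S hS) hζ2, pow_add, hζ]
    ring
  · rw [Ne, symmDiff_eq_left]
    exact (hD S hS).ne_empty
  · exact mem_powerset.2 (symmDiff_subset_of_subset hS (hDU S hS))
  · rw [hDD S hS, symmDiff_symmDiff_cancel_right]

theorem Nat.Prime.dvd_choose_of_dvd_of_not_dvd {p n k : ℕ} (hp : p.Prime) (hn : p ∣ n)
    (hk : ¬ p ∣ k) : p ∣ n.choose k := by
  obtain _ | l := k
  · exact absurd (dvd_zero p) hk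
  obtain _ | m := n
  · simp
  have h : p ∣ (m + 1).choose (l + 1) * (l + 1) := Nat.add_one_mul_choose_eq m l ▸ hn.mul_right _
  exact (hp.dvd_mul.1 h).resolve_right hk

theorem Nat.modEq_two_mul_of_odd_of_dvd {p k : ℕ} (hk : Odd k) (hpk : p ∣ k) :
    k ≡ p [MOD 2 * p] := by
  obtain ⟨m, rfl⟩ := hpk
  obtain ⟨l, rfl⟩ := (Nat.odd_mul.1 hk).2
  calc p * (2 * l + 1) = p + 2 * p * l := by ring
    _ ≡ p [MOD 2 * p] := Nat.add_mul_mod_self_left p (2 * p) l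

theorem two_pow_ne_two_pow_add_two_pow {x y z : ℕ} (hyz : y ≠ z) : 2 ^ x ≠ 2 ^ y + 2 ^ z := by
  wlog h : y < z generalizing y z
  · rw [add_comm]; exact this hyz.symm (by omega)
  intro hx
  have hyz' : 2 ^ y < 2 ^ z := Nat.pow_lt_pow_right one_lt_two h
  rcases le_or_gt x z with hxz | hxz
  · have := Nat.pow_le_pow_right two_pos hxz
    have := Nat.two_pow_pos y
    omega
  · have := Nat.pow_le_pow_right two_pos hxz
    rw [pow_succ] at this
    omega

open Polynomial in
theorem cast_choose_two_pow_add (x m k : ℕ) :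
    ((2 ^ x + m).choose k : ZMod 2)
      = m.choose k + if 2 ^ x ≤ k then (m.choose (k - 2 ^ x) : ZMod 2) else 0 := by
  have h : (X + 1 : (ZMod 2)[X]) ^ (2 ^ x + m) = X ^ 2 ^ x * (X + 1) ^ m + (X + 1) ^ m := by
    rw [pow_add, add_pow_char_pow, one_pow, add_mul, one_mul]
  rw [← coeff_X_add_one_pow, h, coeff_add, coeff_X_pow_mul', coeff_X_add_one_pow, add_comm]
  split_ifs <;> simp [coeff_X_add_one_pow]

theorem even_choose_two_pow_add_two_pow {u v k : ℕ} (hk0 : k ≠ 0) (hku : k ≠ 2 ^ u)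
    (hkv : k ≠ 2 ^ v) (hkn : k ≠ 2 ^ u + 2 ^ v) : Even ((2 ^ u + 2 ^ v).choose k) := by
  have h2 {j : ℕ} (hj0 : j ≠ 0) (hjv : j ≠ 2 ^ v) : ((2 ^ v).choose j : ZMod 2) = 0 :=
    ZMod.natCast_eq_zero_iff_even.2 (even_iff_two_dvd.2 (Nat.prime_two.dvd_choose_pow hj0 hjv))
  rw [← ZMod.natCast_eq_zero_iff_even, cast_choose_two_pow_add, h2 hk0 hkv]
  split_ifs with hk
  · rw [h2 (by omega) (by omega), add_zero]
  · rw [add_zero]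

theorem odd_choose_two_pow_add {x m : ℕ} (h : Even (m.choose (2 ^ x))) :
    Odd ((2 ^ x + m).choose (2 ^ x)) := by
  rw [← ZMod.natCast_eq_one_iff_odd, cast_choose_two_pow_add, ZMod.natCast_eq_zero_iff_even.2 h]
  simp

theorem mem_descentSet_bounds {n k : ℕ} {π : Perm (Fin n)} (h : k ∈ descentSet n π) :
    1 ≤ k ∧ k < n :=
  mem_Ico.1 (filter_subset _ _ h)

theorem zero_notMem_descentSet (n : ℕ) (π : Perm (Fin n)) : 0 ∉ descentSet n π :=
  fun h => absurd (mem_descentSet_bounds h).1 (by omega)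

theorem succ_mem_descentSet_iff {n k : ℕ} (π : Perm (Fin n)) (hk : k + 1 < n) :
    k + 1 ∈ descentSet n π ↔ π ⟨k + 1, hk⟩ < π ⟨k, by omega⟩ := by
  simp [descentSet, hk]

theorem descentSet_eq_empty_iff {n : ℕ} (π : Perm (Fin n)) : descentSet n π = ∅ ↔ π = 1 := by
  refine ⟨fun h => ?_, fun h => by subst h; ext k; simp [descentSet]⟩
  cases n with
  | zero => exact Subsingleton.elim _ _
  | succ n =>
    have hmono : StrictMono π := Fin.strictMono_iff_lt_succ.2 fun k => by
      have hk : ¬ π k.succ < π k.castSucc := fun hlt =>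
        notMem_empty _ (h ▸ (succ_mem_descentSet_iff π (Nat.succ_lt_succ k.2)).2 hlt)
      exact lt_of_le_of_ne (not_lt.1 hk) (π.injective.ne Fin.castSucc_lt_succ.ne)
    exact Equiv.ext (congrFun hmono.eq_id)

theorem beta_empty (n : ℕ) : beta n ∅ = 1 := by
  simp [beta, descentSet_eq_empty_iff, filter_eq']

section Shuffle

variable {i j : ℕ}

theorem card_compl_of_card_eq {T : Finset (Fin (i + j))} (hT : #T = i) : #Tᶜ = j := by
  rw [card_compl, hT, Fintype.card_fin, Nat.add_sub_cancel_left]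

variable (T : Finset (Fin (i + j))) (hT : #T = i) (σ : Perm (Fin i)) (τ : Perm (Fin j))

/-- The values in `T` arranged in the pattern of `σ`, followed by those in `Tᶜ` in the pattern
of `τ`. -/
def shuffle : Perm (Fin (i + j)) :=
  finSumFinEquiv.symm.trans <| (σ.sumCongr τ).trans <|
    ((T.orderIsoOfFin hT).toEquiv.sumCongr
      ((Tᶜ.orderIsoOfFin (card_compl_of_card_eq hT)).toEquiv.trans
        (subtypeEquivRight fun _ => mem_compl))).trans (sumCompl (· ∈ T))

theorem shuffle_castAdd (k : Fin i) :
    shuffle T hT σ τ (Fin.castAdd j k) = T.orderEmbOfFin hT (σ k) := by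
  simp [shuffle]

theorem shuffle_natAdd (k : Fin j) :
    shuffle T hT σ τ (Fin.natAdd i k) = Tᶜ.orderEmbOfFin (card_compl_of_card_eq hT) (τ k) := by
  simp [shuffle]

theorem image_shuffle_castAdd :
    univ.image (fun k => shuffle T hT σ τ (Fin.castAdd j k)) = T := by
  refine Eq.trans ?_ (image_orderEmbOfFin_univ T hT)
  ext x
  simp only [shuffle_castAdd, mem_image, mem_univ, true_and]
  exact (σ.surjective.exists (p := fun y => T.orderEmbOfFin hT y = x)).symm

theorem shuffle_injective :
    Function.Injective fun x : {T : Finset (Fin (i + j)) // #T = i} × Perm (Fin i) × Perm (Fin j) =>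
      shuffle x.1.1 x.1.2 x.2.1 x.2.2 := by
  rintro ⟨⟨T, hT⟩, σ, τ⟩ ⟨⟨T', hT'⟩, σ', τ'⟩ h
  dsimp only at h
  obtain rfl : T = T' := by
    rw [← image_shuffle_castAdd T hT σ τ, h, image_shuffle_castAdd]
  have hσ : σ = σ' := Equiv.ext fun k => (T.orderEmbOfFin hT).injective <| by
    rw [← shuffle_castAdd T hT σ τ, h, shuffle_castAdd]
  have hτ : τ = τ' := Equiv.ext fun k =>
      (Tᶜ.orderEmbOfFin (card_compl_of_card_eq hT)).injective <| by
    rw [← shuffle_natAdd T hT σ τ, h, shuffle_natAdd]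
  rw [hσ, hτ]

theorem shuffle_bijective :
    Function.Bijective fun x : {T : Finset (Fin (i + j)) // #T = i} × Perm (Fin i) × Perm (Fin j) =>
      shuffle x.1.1 x.1.2 x.2.1 x.2.2 := by
  refine (Fintype.bijective_iff_injective_and_card _).2 ⟨shuffle_injective, ?_⟩
  simp only [Fintype.card_prod, Fintype.card_finset_len, Fintype.card_perm, Fintype.card_fin]
  rw [← mul_assoc, Nat.choose_symm_add, Nat.add_choose_mul_factorial_mul_factorial]

theorem succ_mem_descentSet_shuffle_iff {m : ℕ} (hm : m + 1 < i) :
    m + 1 ∈ descentSet (i + j) (shuffle T hT σ τ) ↔ m + 1 ∈ descentSet i σ := by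
  rw [succ_mem_descentSet_iff _ (by omega), succ_mem_descentSet_iff _ hm]
  exact (shuffle_castAdd T hT σ τ ⟨m + 1, hm⟩ ▸ shuffle_castAdd T hT σ τ ⟨m, by omega⟩ ▸
    (T.orderEmbOfFin hT).lt_iff_lt)

theorem add_succ_mem_descentSet_shuffle_iff {m : ℕ} (hm : m + 1 < j) :
    i + (m + 1) ∈ descentSet (i + j) (shuffle T hT σ τ) ↔ m + 1 ∈ descentSet j τ := by
  rw [← add_assoc, succ_mem_descentSet_iff _ (by omega), succ_mem_descentSet_iff _ hm]
  exact (shuffle_natAdd T hT σ τ ⟨m + 1, hm⟩ ▸ shuffle_natAdd T hT σ τ ⟨m, by omega⟩ ▸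
    (Tᶜ.orderEmbOfFin (card_compl_of_card_eq hT)).lt_iff_lt)

theorem erase_descentSet_shuffle :
    (descentSet (i + j) (shuffle T hT σ τ)).erase i
      = descentSet i σ ∪ (descentSet j τ).image (i + ·) := by
  ext k
  simp only [mem_erase, mem_union, mem_image]
  rcases lt_or_ge k i with hk | hk
  · have hτk : ¬ ∃ d ∈ descentSet j τ, i + d = k := by rintro ⟨d, -, rfl⟩; omega
    rcases k with _ | m
    · simp [zero_notMem_descentSet]
    · rw [succ_mem_descentSet_shuffle_iff T hT σ τ hk]
      simp [hk.ne, hτk]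
  · obtain ⟨d, rfl⟩ := Nat.exists_eq_add_of_le hk
    have hσk : i + d ∉ descentSet i σ := fun h => by have := mem_descentSet_bounds h; omega
    rcases d with _ | m
    · simpa [zero_notMem_descentSet] using hσk
    · rcases lt_or_ge (m + 1) j with hm | hm
      · rw [add_succ_mem_descentSet_shuffle_iff T hT σ τ hm]
        simp [hσk]
      · have hπ : i + (m + 1) ∉ descentSet (i + j) (shuffle T hT σ τ) := fun h => by
          have := mem_descentSet_bounds h; omega
        have hτ : m + 1 ∉ descentSet j τ := fun h => by have := mem_descentSet_bounds h; omega
        simp [hσk, hπ, hτ]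

end Shuffle

def lowerPart (i : ℕ) (S : Finset ℕ) : Finset ℕ := S.filter (· < i)

def upperPart (i : ℕ) (S : Finset ℕ) : Finset ℕ := (S.filter (i < ·)).image (· - i)

@[simp]
theorem mem_lowerPart {i k : ℕ} {S : Finset ℕ} : k ∈ lowerPart i S ↔ k ∈ S ∧ k < i :=
  mem_filter

@[simp]
theorem mem_upperPart {i k : ℕ} {S : Finset ℕ} : k ∈ upperPart i S ↔ 0 < k ∧ i + k ∈ S := by
  simp only [upperPart, mem_image, mem_filter]
  constructor
  · rintro ⟨s, ⟨hs, his⟩, rfl⟩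
    exact ⟨by omega, by rwa [Nat.add_sub_cancel' his.le]⟩
  · rintro ⟨hk, hS⟩
    exact ⟨i + k, ⟨hS, by omega⟩, by omega⟩

theorem union_image_add_eq_erase_iff {i : ℕ} {A B S : Finset ℕ} (hA : ∀ a ∈ A, a < i)
    (hB : 0 ∉ B) :
    A ∪ B.image (i + ·) = S.erase i ↔ A = lowerPart i S ∧ B = upperPart i S := by
  simp only [Finset.ext_iff, mem_union, mem_image, mem_erase, mem_lowerPart, mem_upperPart]
  constructor
  · intro h
    refine ⟨fun k => ?_, fun k => ?_⟩
    · have := h k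
      grind
    · have := h (i + k)
      grind
  · rintro ⟨hAS, hBS⟩ k
    constructor
    · grind
    · intro hk
      rcases lt_or_gt_of_ne hk.1 with hki | hki
      · grind
      · exact Or.inr ⟨k - i, (hBS _).2 ⟨by omega, by rw [Nat.add_sub_cancel' hki.le]; exact hk.2⟩,
          by omega⟩

theorem lowerPart_subset_Ico {i j : ℕ} {S : Finset ℕ} (hS : S ⊆ Ico 1 (i + j)) :
    lowerPart i S ⊆ Ico 1 i := fun k hk => by
  have := mem_Ico.1 (hS (mem_lowerPart.1 hk).1)
  exact mem_Ico.2 ⟨this.1, (mem_lowerPart.1 hk).2⟩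

theorem upperPart_subset_Ico {i j : ℕ} {S : Finset ℕ} (hS : S ⊆ Ico 1 (i + j)) :
    upperPart i S ⊆ Ico 1 j := fun k hk => by
  have := mem_Ico.1 (hS (mem_upperPart.1 hk).2)
  exact mem_Ico.2 ⟨(mem_upperPart.1 hk).1, by omega⟩

theorem beta_add_beta_symmDiff_eq_card (n i : ℕ) (S : Finset ℕ) :
    beta n S + beta n (S ∆ {i})
      = #(univ.filter fun π : Perm (Fin n) => (descentSet n π).erase i = S.erase i) := by
  have hdisj : Disjoint (univ.filter fun π : Perm (Fin n) => descentSet n π = S)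
      (univ.filter fun π => descentSet n π = S ∆ {i}) := by
    refine disjoint_filter.2 fun π _ h h' => ?_
    have := congrArg (i ∈ ·) (h.symm.trans h')
    simp [mem_symmDiff] at this
  rw [beta, beta, ← card_union_of_disjoint hdisj, ← filter_or]
  simp only [erase_eq_erase_iff]

theorem beta_add_beta_symmDiff (i j : ℕ) (S : Finset ℕ) :
    beta (i + j) S + beta (i + j) (S ∆ {i})
      = (i + j).choose i * beta i (lowerPart i S) * beta j (upperPart i S) := by
  let e := Equiv.ofBijective _ (shuffle_bijective (i := i) (j := j))
  rw [beta_add_beta_symmDiff_eq_card, card_equiv e.symm (t := univ ×ˢ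
      ((univ.filter fun σ => descentSet i σ = lowerPart i S) ×ˢ
        (univ.filter fun τ => descentSet j τ = upperPart i S)))]
  · rw [card_product, card_product, card_univ, Fintype.card_finset_len, Fintype.card_fin, beta,
      beta, mul_assoc]
  · intro π
    obtain ⟨⟨⟨T, hT⟩, σ, τ⟩, rfl⟩ := e.surjective π
    simp only [mem_filter, mem_product, mem_univ, true_and, e.symm_apply_apply]
    rw [Equiv.ofBijective_apply, erase_descentSet_shuffle, union_image_add_eq_erase_iff
      (fun a ha => (mem_descentSet_bounds ha).2) (zero_notMem_descentSet j τ)]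

theorem dvd_beta_add_beta_symmDiff_one {n : ℕ} (hn : 0 < n) (S : Finset ℕ) :
    n ∣ beta n S + beta n (S ∆ {1}) := by
  obtain ⟨j, rfl⟩ := Nat.exists_eq_add_of_le hn
  rw [beta_add_beta_symmDiff, Nat.choose_one_right, mul_assoc]
  exact dvd_mul_right _ _

theorem even_beta_iff_even_beta_inter {n : ℕ} {E S : Finset ℕ} (hS : S ⊆ Ico 1 n)
    (hE : ∀ t ∈ Ico 1 n, t ∉ E → Even (n.choose t)) :
    Even (beta n S) ↔ Even (beta n (S ∩ E)) := by
  induction S using Finset.strongInduction with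
  | H S ih =>
    by_cases h : ∃ t ∈ S, t ∉ E
    · obtain ⟨t, htS, htE⟩ := h
      have hSt : S.erase t ⊆ Ico 1 n := (erase_subset t S).trans hS
      have hrec : Even (beta n S + beta n (S.erase t)) := by
        obtain ⟨j, rfl⟩ := Nat.exists_eq_add_of_le (mem_Ico.1 (hS htS)).2.le
        rw [← symmDiff_singleton_eq_erase htS, beta_add_beta_symmDiff, mul_assoc]
        exact (hE t (hS htS) htE).mul_right _
      rw [Nat.even_add.1 hrec, ih _ (erase_ssubset htS) hSt, erase_inter,
        erase_eq_of_notMem (fun h => htE (mem_inter.1 h).2)]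
    · push Not at h
      rw [inter_eq_left.2 h]

theorem odd_beta_two_pow {x : ℕ} {S : Finset ℕ} (hS : S ⊆ Ico 1 (2 ^ x)) :
    Odd (beta (2 ^ x) S) := by
  rw [← Nat.not_even_iff_odd, even_beta_iff_even_beta_inter hS (E := ∅), inter_empty, beta_empty]
  · decide
  · intro t ht _
    exact even_iff_two_dvd.2 (Nat.prime_two.dvd_choose_pow (by grind) (by grind))

theorem odd_beta_add_beta_symmDiff_two_pow {x y : ℕ} (hxy : x ≠ y) {S : Finset ℕ}
    (hS : S ⊆ Ico 1 (2 ^ x + 2 ^ y)) :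
    Odd (beta (2 ^ x + 2 ^ y) S + beta (2 ^ x + 2 ^ y) (S ∆ {2 ^ x})) := by
  have hchoose : Even ((2 ^ y).choose (2 ^ x)) := even_iff_two_dvd.2 <|
    Nat.prime_two.dvd_choose_pow (by positivity) (Nat.pow_right_injective le_rfl |>.ne hxy)
  rw [beta_add_beta_symmDiff]
  exact ((odd_choose_two_pow_add hchoose).mul (odd_beta_two_pow (lowerPart_subset_Ico hS))).mul
    (odd_beta_two_pow (upperPart_subset_Ico hS))

theorem odd_beta_two_pow_add_two_pow_of_notMem {u v : ℕ} {S : Finset ℕ}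
    (hS : S ⊆ Ico 1 (2 ^ u + 2 ^ v)) (hu : 2 ^ u ∉ S) (hv : 2 ^ v ∉ S) :
    Odd (beta (2 ^ u + 2 ^ v) S) := by
  rw [← Nat.not_even_iff_odd, even_beta_iff_even_beta_inter hS (E := {2 ^ u, 2 ^ v})]
  · rw [(disjoint_iff_inter_eq_empty).1 (by simp [hu, hv]), beta_empty]
    decide
  · intro t ht htE
    simp only [mem_insert, mem_singleton, not_or] at htE
    exact even_choose_two_pow_add_two_pow (by grind) htE.1 htE.2 (by grind)

theorem odd_beta_two_pow_add_two_pow_iff {u v : ℕ} (huv : u ≠ v) {S : Finset ℕ}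
    (hS : S ⊆ Ico 1 (2 ^ u + 2 ^ v)) :
    Odd (beta (2 ^ u + 2 ^ v) S) ↔ (2 ^ u ∈ S ↔ 2 ^ v ∈ S) := by
  have hne : 2 ^ u ≠ 2 ^ v := Nat.pow_right_injective le_rfl |>.ne huv
  have hu : {2 ^ u} ⊆ Ico 1 (2 ^ u + 2 ^ v) := singleton_subset_iff.2 <|
    mem_Ico.2 ⟨Nat.one_le_two_pow, Nat.lt_add_of_pos_right (Nat.two_pow_pos v)⟩
  have hv : {2 ^ v} ⊆ Ico 1 (2 ^ u + 2 ^ v) := singleton_subset_iff.2 <|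
    mem_Ico.2 ⟨Nat.one_le_two_pow, Nat.lt_add_of_pos_left (Nat.two_pow_pos u)⟩
  have flip_u {T : Finset ℕ} (hT : T ⊆ Ico 1 (2 ^ u + 2 ^ v)) :
      Odd (beta (2 ^ u + 2 ^ v) T) ↔ Even (beta (2 ^ u + 2 ^ v) (T ∆ {2 ^ u})) :=
    Nat.odd_add.1 (odd_beta_add_beta_symmDiff_two_pow huv hT)
  have flip_v {T : Finset ℕ} (hT : T ⊆ Ico 1 (2 ^ u + 2 ^ v)) :
      Odd (beta (2 ^ u + 2 ^ v) T) ↔ Even (beta (2 ^ u + 2 ^ v) (T ∆ {2 ^ v})) := by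
    rw [add_comm] at hT ⊢
    exact Nat.odd_add.1 (odd_beta_add_beta_symmDiff_two_pow huv.symm hT)
  have hSu' := symmDiff_subset_of_subset hS hu
  by_cases hSu : 2 ^ u ∈ S <;> by_cases hSv : 2 ^ v ∈ S
  · have := flip_v hSu'
    have := odd_beta_two_pow_add_two_pow_of_notMem (symmDiff_subset_of_subset hSu' hv)
      (by simp [mem_symmDiff, hne, hSu]) (by simp [mem_symmDiff, hne.symm, hSv])
    grind
  · have := odd_beta_two_pow_add_two_pow_of_notMem hSu' (by simp [mem_symmDiff, hSu])
      (by simp [mem_symmDiff, hne.symm, hSv])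
    grind
  · have := odd_beta_two_pow_add_two_pow_of_notMem (symmDiff_subset_of_subset hS hv)
      (by simp [mem_symmDiff, hne, hSu]) (by simp [mem_symmDiff, hSv])
    grind
  · simp only [hSu, hSv, iff_true]
    exact odd_beta_two_pow_add_two_pow_of_notMem hS hSu hSv

theorem beta_add_beta_symmDiff_two_pow_modEq {p x y z : ℕ} (hp : p.Prime) (hp2 : p ≠ 2)
    (hxy : x ≠ y) (hxz : x ≠ z) (hyz : y ≠ z) (hpn : p ∣ 2 ^ x + 2 ^ y + 2 ^ z) {S : Finset ℕ}
    (hS : S ⊆ Ico 1 (2 ^ x + 2 ^ y + 2 ^ z)) (hmem : 2 ^ x + 2 ^ y ∈ S ↔ 2 ^ x + 2 ^ z ∈ S) :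
    beta (2 ^ x + 2 ^ y + 2 ^ z) S + beta (2 ^ x + 2 ^ y + 2 ^ z) (S ∆ {2 ^ x})
      ≡ p [MOD 2 * p] := by
  have hpow := Nat.pow_right_injective (le_refl 2)
  rw [add_assoc] at hpn hS ⊢
  rw [beta_add_beta_symmDiff]
  have hchoose : Odd ((2 ^ x + (2 ^ y + 2 ^ z)).choose (2 ^ x)) :=
    odd_choose_two_pow_add <| even_choose_two_pow_add_two_pow (by positivity) (hpow.ne hxy)
      (hpow.ne hxz) (two_pow_ne_two_pow_add_two_pow hyz)
  have hupper : Odd (beta (2 ^ y + 2 ^ z) (upperPart (2 ^ x) S)) :=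
    (odd_beta_two_pow_add_two_pow_iff hyz (upperPart_subset_Ico hS)).2 (by simpa using hmem)
  have hp_two_pow : ¬ p ∣ 2 ^ x := fun h =>
    hp2 ((Nat.prime_dvd_prime_iff_eq hp Nat.prime_two).1 (hp.dvd_of_dvd_pow h))
  refine Nat.modEq_two_mul_of_odd_of_dvd
    ((hchoose.mul (odd_beta_two_pow (lowerPart_subset_Ico hS))).mul hupper) ?_
  exact ((hp.dvd_choose_of_dvd_of_not_dvd hpn hp_two_pow).mul_right _).mul_right _

def pairSums (a b c : ℕ) : Finset ℕ := {2 ^ a + 2 ^ b, 2 ^ a + 2 ^ c, 2 ^ b + 2 ^ c}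

/-- By pigeonhole two of the three pair sums have the same membership in `S`; the pivot is the
digit `2 ^ x` which these two sums share. -/
def pivot (a b c : ℕ) (S : Finset ℕ) : ℕ :=
  if (2 ^ a + 2 ^ b ∈ S ↔ 2 ^ a + 2 ^ c ∈ S) then 2 ^ a
  else if (2 ^ a + 2 ^ b ∈ S ↔ 2 ^ b + 2 ^ c ∈ S) then 2 ^ b else 2 ^ c

section Pivot

variable {a b c : ℕ}

theorem exists_pivot_eq_two_pow (S : Finset ℕ) :
    ∃ x, (x = a ∨ x = b ∨ x = c) ∧ pivot a b c S = 2 ^ x := by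
  unfold pivot
  split_ifs <;> exact ⟨_, by simp, rfl⟩

theorem pivot_mem_Ico (S : Finset ℕ) : pivot a b c S ∈ Ico 1 (2 ^ a + 2 ^ b + 2 ^ c) := by
  obtain ⟨x, hx, hpx⟩ := exists_pivot_eq_two_pow (a := a) (b := b) (c := c) S
  have := Nat.two_pow_pos a; have := Nat.two_pow_pos b; have := Nat.two_pow_pos c
  rw [hpx, mem_Ico]
  rcases hx with rfl | rfl | rfl <;> omega

theorem disjoint_pairSums (hab : a ≠ b) (hac : a ≠ c) (hbc : b ≠ c) {D : Finset ℕ}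
    (hD : ∀ d ∈ D, ∃ x, d = 2 ^ x) : Disjoint D (pairSums a b c) := by
  refine disjoint_left.2 fun d hd => ?_
  obtain ⟨x, rfl⟩ := hD d hd
  simp [pairSums, two_pow_ne_two_pow_add_two_pow, hab, hac, hbc]

theorem pivot_symmDiff {S D : Finset ℕ} (hD : Disjoint D (pairSums a b c)) :
    pivot a b c (S ∆ D) = pivot a b c S := by
  have key {s : ℕ} (hs : s ∈ pairSums a b c) : s ∈ S ∆ D ↔ s ∈ S := by
    simp [mem_symmDiff, disjoint_right.1 hD hs]
  simp only [pivot, key (by simp [pairSums] : 2 ^ a + 2 ^ b ∈ _),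
    key (by simp [pairSums] : 2 ^ a + 2 ^ c ∈ _), key (by simp [pairSums] : 2 ^ b + 2 ^ c ∈ _)]

theorem pivot_symmDiff_one_pivot (hab : a ≠ b) (hac : a ≠ c) (hbc : b ≠ c) (S : Finset ℕ) :
    pivot a b c (S ∆ {1, pivot a b c S}) = pivot a b c S := by
  obtain ⟨x, -, hx⟩ := exists_pivot_eq_two_pow (a := a) (b := b) (c := c) S
  refine pivot_symmDiff (disjoint_pairSums hab hac hbc fun d hd => ?_)
  rcases mem_insert.1 hd with rfl | hd
  · exact ⟨0, rfl⟩
  · exact ⟨x, (mem_singleton.1 hd).trans hx⟩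

theorem beta_add_beta_symmDiff_pivot_modEq {p : ℕ} (hp : p.Prime) (hp2 : p ≠ 2)
    (hab : a ≠ b) (hac : a ≠ c) (hbc : b ≠ c) (hpn : p ∣ 2 ^ a + 2 ^ b + 2 ^ c) {S : Finset ℕ}
    (hS : S ⊆ Ico 1 (2 ^ a + 2 ^ b + 2 ^ c)) :
    beta (2 ^ a + 2 ^ b + 2 ^ c) S + beta (2 ^ a + 2 ^ b + 2 ^ c) (S ∆ {pivot a b c S})
      ≡ p [MOD 2 * p] := by
  unfold pivot
  split_ifs with h₁ h₂
  · exact beta_add_beta_symmDiff_two_pow_modEq hp hp2 hab hac hbc hpn hS h₁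
  · rw [show 2 ^ a + 2 ^ b + 2 ^ c = 2 ^ b + 2 ^ a + 2 ^ c by ring] at hpn hS ⊢
    rw [add_comm (2 ^ a)] at h₂
    exact beta_add_beta_symmDiff_two_pow_modEq hp hp2 hab.symm hbc hac hpn hS h₂
  · rw [show 2 ^ a + 2 ^ b + 2 ^ c = 2 ^ c + 2 ^ a + 2 ^ b by ring] at hpn hS ⊢
    refine beta_add_beta_symmDiff_two_pow_modEq hp hp2 hac.symm hbc.symm hab hpn hS ?_
    rw [add_comm (2 ^ c), add_comm (2 ^ c)]
    tauto

theorem beta_symmDiff_one_pivot_modEq {p : ℕ} (hp : p.Prime) (hp2 : p ≠ 2) (ha : a ≠ 0)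
    (hb : b ≠ 0) (hc : c ≠ 0) (hab : a ≠ b) (hac : a ≠ c) (hbc : b ≠ c)
    (hpn : p ∣ 2 ^ a + 2 ^ b + 2 ^ c) {S : Finset ℕ} (hS : S ⊆ Ico 1 (2 ^ a + 2 ^ b + 2 ^ c)) :
    beta (2 ^ a + 2 ^ b + 2 ^ c) (S ∆ {1, pivot a b c S})
      ≡ beta (2 ^ a + 2 ^ b + 2 ^ c) S + p [MOD 2 * p] := by
  have h1 : 1 ∈ Ico 1 (2 ^ a + 2 ^ b + 2 ^ c) :=
    mem_Ico.2 ⟨le_rfl, (Nat.one_lt_two_pow ha).trans_le (le_add_right (le_add_right le_rfl))⟩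
  set N := 2 ^ a + 2 ^ b + 2 ^ c with hN
  obtain ⟨x, hx, ht⟩ := exists_pivot_eq_two_pow (a := a) (b := b) (c := c) S
  set t := pivot a b c S
  set T := S ∆ {1}
  have hT : T ⊆ Ico 1 N := symmDiff_subset_of_subset hS (singleton_subset_iff.2 h1)
  have hpivotT : pivot a b c T = t :=
    pivot_symmDiff (disjoint_pairSums hab hac hbc fun d hd => ⟨0, mem_singleton.1 hd⟩)
  have ht1 : t ≠ 1 := by
    rw [ht, ← pow_zero 2]
    exact (Nat.pow_right_injective le_rfl).ne (by omega)
  have hST : S ∆ {1, t} = T ∆ {t} := by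
    rw [symmDiff_assoc, (disjoint_singleton.2 ht1.symm).symmDiff_eq_sup, insert_eq]
    rfl
  have h2pN : 2 * p ∣ N := by
    have hcop : Nat.Coprime 2 p := (Nat.coprime_primes Nat.prime_two hp).2 hp2.symm
    refine hcop.mul_dvd_of_dvd_of_dvd ?_ hpn
    simp [hN, Nat.dvd_add_right, ha, hb, hc]
  have hS_T : beta N S + beta N T ≡ 0 [MOD 2 * p] :=
    Nat.modEq_zero_iff_dvd.2 (h2pN.trans (dvd_beta_add_beta_symmDiff_one (by positivity) S))
  have hT_tT : beta N T + beta N (T ∆ {t}) ≡ p [MOD 2 * p] :=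
    hpivotT ▸ beta_add_beta_symmDiff_pivot_modEq hp hp2 hab hac hbc hpn hT
  rw [hST]
  calc beta N (T ∆ {t}) = 0 + beta N (T ∆ {t}) := (zero_add _).symm
    _ ≡ beta N S + beta N T + beta N (T ∆ {t}) [MOD 2 * p] := hS_T.symm.add_right _
    _ = beta N S + (beta N T + beta N (T ∆ {t})) := add_assoc _ _ _
    _ ≡ beta N S + p [MOD 2 * p] := hT_tT.add_left _

end Pivot

open Polynomial in
theorem cyclotomic_two_mul_dvd_Q_two_pow_add_two_pow_add_two_pow {p a b c : ℕ} (hp : p.Prime)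
    (hp2 : p ≠ 2) (ha : a ≠ 0) (hb : b ≠ 0) (hc : c ≠ 0) (hab : a ≠ b) (hac : a ≠ c)
    (hbc : b ≠ c) (hpn : p ∣ 2 ^ a + 2 ^ b + 2 ^ c) :
    cyclotomic (2 * p) ℤ ∣ Q (2 ^ a + 2 ^ b + 2 ^ c) := by
  have h2p : 0 < 2 * p := by have := hp.pos; omega
  have hζ := Complex.isPrimitiveRoot_exp (2 * p) h2p.ne'
  set ζ := Complex.exp (2 * Real.pi * Complex.I / (2 * p : ℕ))
  have hζp : ζ ^ p = -1 := by
    have := hζ.pow_of_dvd hp.ne_zero (dvd_mul_left p 2)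
    rw [Nat.mul_div_cancel _ hp.pos] at this
    exact this.eq_neg_one_of_two_right
  suffices h : aeval ζ (Q (2 ^ a + 2 ^ b + 2 ^ c)) = 0 by
    rw [cyclotomic_eq_minpoly hζ h2p]
    exact minpoly.isIntegrallyClosed_dvd (hζ.isIntegral h2p) h
  simp only [Q, map_sum, map_pow, aeval_X]
  have h1 : 1 ∈ Ico 1 (2 ^ a + 2 ^ b + 2 ^ c) :=
    mem_Ico.2 ⟨le_rfl, (Nat.one_lt_two_pow ha).trans_le (le_add_right (le_add_right le_rfl))⟩
  exact sum_powerset_pow_eq_zero_of_symmDiff hζp (fun S => {1, pivot a b c S})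
    (fun S _ => insert_subset h1 (singleton_subset_iff.2 (pivot_mem_Ico S)))
    (fun S _ => insert_nonempty _ _)
    (fun S _ => by rw [pivot_symmDiff_one_pivot hab hac hbc])
    (fun S hS => beta_symmDiff_one_pivot_modEq hp hp2 ha hb hc hab hac hbc hpn hS)

theorem pow_orderOf_div_two_eq_neg_one {R : Type*} [CommRing R] [NoZeroDivisors R] {x : R}
    (hx : Even (orderOf x)) (hx0 : orderOf x ≠ 0) : x ^ (orderOf x / 2) = -1 := by
  have h2 := even_iff_two_dvd.1 hx
  have h := (IsPrimitiveRoot.orderOf x).pow_of_dvd (by omega) (Nat.div_dvd_of_dvd h2)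
  rw [Nat.div_div_self h2 hx0] at h
  exact h.eq_neg_one_of_two_right

theorem pow_add_pow_add_pow_eq_sub_two {R : Type*} [CommRing R] [NoZeroDivisors R] {x : R}
    {a b c : ℕ} (hx : Even (orderOf x)) (hx0 : orderOf x ≠ 0)
    (h : ({a % orderOf x, b % orderOf x, c % orderOf x} : Multiset ℕ)
      = {1, orderOf x / 2, orderOf x / 2}) :
    x ^ a + x ^ b + x ^ c = x - 2 := by
  have := congrArg (fun M : Multiset ℕ => (M.map (x ^ ·)).sum) h
  simp only [Multiset.insert_eq_cons, Multiset.map_cons, Multiset.map_singleton,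
    Multiset.sum_cons, Multiset.sum_singleton, pow_mod_orderOf,
    pow_orderOf_div_two_eq_neg_one hx hx0] at this
  linear_combination this

theorem cyclotomic_two_p_dvd_three_digits_one_general (p a b c g : ℕ) (hp : p.Prime)
    (hpodd : Odd p) (hg : g = orderOf (2 : ZMod p)) (hgeven : Even g)
    (hab : a < b) (hbc : b < c)
    (hcong : ({a % g, b % g, c % g} : Multiset ℕ) = {1, g / 2, g / 2}) :
    Polynomial.cyclotomic (2 * p) ℤ ∣ Q (2 ^ c + 2 ^ b + 2 ^ a) := by
  have : Fact p.Prime := ⟨hp⟩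
  have hp2 : p ≠ 2 := by
    rintro rfl
    exact Nat.not_even_iff_odd.2 hpodd even_two
  have h2 : (2 : ZMod p) ≠ 0 := fun h => hp2 <| (Nat.prime_dvd_prime_iff_eq hp Nat.prime_two).1 <|
    (ZMod.natCast_eq_zero_iff 2 p).1 (by exact_mod_cast h)
  have hg0 : g ≠ 0 := hg ▸ (Nat.pos_of_dvd_of_pos (ZMod.orderOf_dvd_card_sub_one h2)
    (by have := hp.two_le; omega)).ne'
  have ha : a ≠ 0 := by
    rintro rfl
    have : 0 % g ∈ ({1, g / 2, g / 2} : Multiset ℕ) := hcong ▸ by simp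
    obtain ⟨k, rfl⟩ := hgeven
    simp only [Nat.zero_mod, Multiset.insert_eq_cons, Multiset.mem_cons, Multiset.mem_singleton]
      at this
    omega
  have hpn : p ∣ 2 ^ c + 2 ^ b + 2 ^ a := by
    subst hg
    rw [← ZMod.natCast_eq_zero_iff]
    push_cast
    linear_combination pow_add_pow_add_pow_eq_sub_two hgeven hg0 hcong
  exact cyclotomic_two_mul_dvd_Q_two_pow_add_two_pow_add_two_pow hp hp2 (by omega) (by omega) ha
    (by omega) (by omega) (by omega) hpn

/-- Let `p` be an odd prime for which the multiplicative order `g` of `2` modulo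
`p` is even, and let `n = 2^c + 2^b + 2^a` with `c > b > a ≥ 0` and `n ≥ 11`.
If the residues of `a, b, c` modulo `g` form the multiset `{1, g/2, g/2}`, then
`Φ_{2p}` divides `Q_n(t)`. -/
theorem cyclotomic_two_p_dvd_three_digits_one (p a b c g : ℕ) (hp : p.Prime)
    (hpodd : Odd p) (hg : g = orderOf (2 : ZMod p)) (hgeven : Even g)
    (hab : a < b) (hbc : b < c) (hn : 11 ≤ 2 ^ c + 2 ^ b + 2 ^ a)
    (hcong : ({a % g, b % g, c % g} : Multiset ℕ) = {1, g / 2, g / 2}) :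
    Polynomial.cyclotomic (2 * p) ℤ ∣ Q (2 ^ c + 2 ^ b + 2 ^ a) :=
  cyclotomic_two_p_dvd_three_digits_one_general p a b c g hp hpodd hg hgeven hab hbc hcong
end
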